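/- arXiv:2401.08403 — 3 statements merged into one kernel-verified Lean document; each statement's English description precedes it below -/
import Mathlib

section
/- Let A be a closed densely defined operator on a Hilbert space H and B a bounded self-adjoint operator such that BA ⊆ AB. Then for every bounded Borel measurable function f : σ(B) → ℂ, f(B)A = A f(B) holds on D(A); i.e., f(B) maps D(A) into D(A) and A f(B) x = f(B) A x for all x ∈ D(A). -/
/-!
Say that `A` commutes with multiplication by `g ∘ b` if that multiplication maps the graph of `A`
into itself. The functions `g` with this property form an algebra that contains `t ↦ t` (this is
`BA ⊆ AB`), and since the graph of `A` is closed, dominated convergence shows that the class is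
closed under bounded pointwise limits on the essential range of `b`. Weierstrass approximation
then gives all continuous functions, these give the indicators of closed sets, the indicators in
the class form a σ-algebra and hence contain all Borel indicators, and simple-function
approximation gives every bounded Borel function.
-/

open MeasureTheory Filter Topology Set ENNReal

theorem tendsto_eLpNorm_of_dominated {α E F : Type*} [MeasurableSpace α] {μ : Measure α}
    [NormedAddCommGroup E] [NormedAddCommGroup F] {p : ℝ≥0∞} (hp : p ≠ ∞)
    {G : ℕ → α → E} {g : α → F} (hG : ∀ n, AEStronglyMeasurable (G n) μ) (hg : MemLp g p μ)
    (h_le : ∀ n, ∀ᵐ ω ∂μ, ‖G n ω‖ ≤ ‖g ω‖)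
    (h_lim : ∀ᵐ ω ∂μ, Tendsto (fun n => G n ω) atTop (𝓝 0)) :
    Tendsto (fun n => eLpNorm (G n) p μ) atTop (𝓝 0) := by
  rcases eq_or_ne p 0 with rfl | hp0
  · simp
  have hq : 0 < p.toReal := ENNReal.toReal_pos hp0 hp
  simp_rw [eLpNorm_eq_lintegral_rpow_enorm_toReal hp0 hp]
  have h_int : Tendsto (fun n => ∫⁻ ω, ‖G n ω‖ₑ ^ p.toReal ∂μ) atTop (𝓝 0) := by
    simpa using tendsto_lintegral_of_dominated_convergence' (f := fun _ => 0)
      (fun ω => ‖g ω‖ₑ ^ p.toReal) (fun n => (hG n).enorm.pow_const _)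
      (fun n => (h_le n).mono fun ω h => ENNReal.rpow_le_rpow (enorm_le_iff_norm_le.2 h) hq.le)
      (lintegral_rpow_enorm_lt_top_of_eLpNorm_lt_top hp0 hp hg.2).ne
      (h_lim.mono fun ω h => by
        have h' : Tendsto (fun n => ‖G n ω‖ₑ) atTop (𝓝 0) := by
          simpa [Function.comp_def] using (continuous_enorm.tendsto 0).comp h
        simpa [Function.comp_def, ENNReal.zero_rpow_of_pos hq] using
          ((ENNReal.continuous_rpow_const (y := p.toReal)).tendsto 0).comp h')
  simpa [Function.comp_def, ENNReal.zero_rpow_of_pos (inv_pos.2 hq)] using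
    ((ENNReal.continuous_rpow_const (y := 1 / p.toReal)).tendsto 0).comp h_int

theorem exists_tendsto_Lp_of_ae_tendsto_mul {X : Type*} [MeasurableSpace X] {μ : Measure X}
    {p : ℝ≥0∞} [Fact (1 ≤ p)] (hp : p ≠ ∞) {φ : ℕ → X → ℂ} {ψ : X → ℂ} {C : ℝ}
    (hφC : ∀ n, ∀ᵐ ω ∂μ, ‖φ n ω‖ ≤ C)
    (hφψ : ∀ᵐ ω ∂μ, Tendsto (fun n => φ n ω) atTop (𝓝 (ψ ω)))
    (u : Lp ℂ p μ) {v : ℕ → Lp ℂ p μ} (hv : ∀ n, v n =ᵐ[μ] fun ω => φ n ω * u ω) :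
    ∃ w : Lp ℂ p μ, w =ᵐ[μ] (fun ω => ψ ω * u ω) ∧ Tendsto v atTop (𝓝 w) := by
  have hv_lim : ∀ᵐ ω ∂μ, Tendsto (fun n => v n ω) atTop (𝓝 (ψ ω * u ω)) := by
    filter_upwards [ae_all_iff.2 hv, hφψ] with ω hvω hω
    simpa only [hvω] using hω.mul_const (u ω)
  have hψC : ∀ᵐ ω ∂μ, ‖ψ ω‖ ≤ C := by
    filter_upwards [ae_all_iff.2 hφC, hφψ] with ω hCω hω
    exact le_of_tendsto' hω.norm hCω
  have hψu : MemLp (fun ω => ψ ω * u ω) p μ := by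
    refine (Lp.memLp u).of_le_mul (c := C)
      (aestronglyMeasurable_of_tendsto_ae _ (fun n => Lp.aestronglyMeasurable (v n)) hv_lim) ?_
    filter_upwards [hψC] with ω hω
    rw [norm_mul]
    exact mul_le_mul_of_nonneg_right hω (norm_nonneg _)
  refine ⟨hψu.toLp _, hψu.coeFn_toLp, Lp.tendsto_Lp_of_tendsto_eLpNorm _ hψu ?_⟩
  refine tendsto_eLpNorm_of_dominated hp
    (fun n => (Lp.aestronglyMeasurable (v n)).sub hψu.1)
    ((Lp.memLp u).const_mul ((C + C : ℝ) : ℂ)) (fun n => ?_) ?_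
  · filter_upwards [hv n, hφC n, hψC] with ω hvω hφω hψω
    simp only [Pi.sub_apply, hvω, ← sub_mul, norm_mul, Complex.norm_real, Real.norm_eq_abs]
    gcongr
    exact (norm_sub_le _ _).trans ((add_le_add hφω hψω).trans (le_abs_self _))
  · filter_upwards [hv_lim] with ω hω
    simpa using hω.sub_const (ψ ω * u ω)

section

variable {X : Type*} [MeasurableSpace X] {μ : Measure X} {p : ℝ≥0∞}

def CommutesWithMul (A : Lp ℂ p μ →ₗ.[ℂ] Lp ℂ p μ) (b : X → ℝ) (g : ℝ → ℂ) : Prop :=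
  ∀ x : A.domain, ∃ y : A.domain,
    ((y : Lp ℂ p μ) : X → ℂ) =ᵐ[μ] (fun ω => g (b ω) * (x : Lp ℂ p μ) ω) ∧
    (A y : X → ℂ) =ᵐ[μ] fun ω => g (b ω) * A x ω

variable {A : Lp ℂ p μ →ₗ.[ℂ] Lp ℂ p μ} {b : X → ℝ}

theorem commutesWithMul_iff [Fact (1 ≤ p)] {g : ℝ → ℂ} {T : Lp ℂ p μ →L[ℂ] Lp ℂ p μ}
    (hT : ∀ u : Lp ℂ p μ, (T u : X → ℂ) =ᵐ[μ] fun ω => g (b ω) * u ω) :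
    CommutesWithMul A b g ↔ ∀ x : A.domain, ∃ h : T x ∈ A.domain, A ⟨T x, h⟩ = T (A x) := by
  constructor
  · intro hg x
    obtain ⟨⟨y, hy_mem⟩, hy, hAy⟩ := hg x
    obtain rfl : y = T x := Lp.ext (hy.trans (hT x).symm)
    exact ⟨hy_mem, Lp.ext (hAy.trans (hT (A x)).symm)⟩
  · intro hTA x
    obtain ⟨h, hA⟩ := hTA x
    exact ⟨⟨T x, h⟩, hT x, hA ▸ hT (A x)⟩

namespace CommutesWithMul

theorem one : CommutesWithMul A b fun _ => 1 :=
  fun x => ⟨x, by simp, by simp⟩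

theorem congr {g g' : ℝ → ℂ} (hg : CommutesWithMul A b g) (h : ∀ t, g t = g' t) :
    CommutesWithMul A b g' :=
  funext h ▸ hg

theorem const_mul {g : ℝ → ℂ} (c : ℂ) (hg : CommutesWithMul A b g) :
    CommutesWithMul A b fun t => c * g t := by
  intro x
  obtain ⟨y, hy, hAy⟩ := hg x
  refine ⟨c • y, ?_, ?_⟩
  · filter_upwards [hy, Lp.coeFn_smul c (y : Lp ℂ p μ)] with ω hyω hcω
    simp only [Submodule.coe_smul, hcω, Pi.smul_apply, smul_eq_mul, hyω, mul_assoc]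
  · filter_upwards [hAy, Lp.coeFn_smul c (A y)] with ω hyω hcω
    simp only [LinearPMap.map_smul, hcω, Pi.smul_apply, smul_eq_mul, hyω, mul_assoc]

theorem add {g h : ℝ → ℂ} (hg : CommutesWithMul A b g) (hh : CommutesWithMul A b h) :
    CommutesWithMul A b fun t => g t + h t := by
  intro x
  obtain ⟨y, hy, hAy⟩ := hg x
  obtain ⟨z, hz, hAz⟩ := hh x
  refine ⟨y + z, ?_, ?_⟩
  · filter_upwards [hy, hz, Lp.coeFn_add (y : Lp ℂ p μ) (z : Lp ℂ p μ)] with ω hyω hzω hω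
    simp only [Submodule.coe_add, hω, Pi.add_apply, hyω, hzω, add_mul]
  · filter_upwards [hAy, hAz, Lp.coeFn_add (A y) (A z)] with ω hyω hzω hω
    simp only [LinearPMap.map_add, hω, Pi.add_apply, hyω, hzω, add_mul]

theorem sub {g h : ℝ → ℂ} (hg : CommutesWithMul A b g) (hh : CommutesWithMul A b h) :
    CommutesWithMul A b fun t => g t - h t := by
  simpa [sub_eq_add_neg] using hg.add (hh.const_mul (-1))

theorem mul {g h : ℝ → ℂ} (hg : CommutesWithMul A b g) (hh : CommutesWithMul A b h) :
    CommutesWithMul A b fun t => g t * h t := by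
  intro x
  obtain ⟨y, hy, hAy⟩ := hh x
  obtain ⟨z, hz, hAz⟩ := hg y
  refine ⟨z, ?_, ?_⟩
  · filter_upwards [hy, hz] with ω hyω hzω
    rw [hzω, hyω, mul_assoc]
  · filter_upwards [hAy, hAz] with ω hyω hzω
    rw [hzω, hyω, mul_assoc]

theorem of_tendsto [Fact (1 ≤ p)] (hp : p ≠ ∞) (hA : A.IsClosed) {g : ℕ → ℝ → ℂ} {f : ℝ → ℂ}
    {C : ℝ} (hgC : ∀ n, ∀ᵐ ω ∂μ, ‖g n (b ω)‖ ≤ C)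
    (hgf : ∀ᵐ ω ∂μ, Tendsto (fun n => g n (b ω)) atTop (𝓝 (f (b ω))))
    (hg : ∀ n, CommutesWithMul A b (g n)) : CommutesWithMul A b f := by
  intro x
  choose y hy hAy using fun n => hg n x
  obtain ⟨w, hw, hyw⟩ := exists_tendsto_Lp_of_ae_tendsto_mul hp hgC hgf x hy
  obtain ⟨Aw, hAw, hAyw⟩ := exists_tendsto_Lp_of_ae_tendsto_mul hp hgC hgf (A x) hAy
  have hgraph : (w, Aw) ∈ A.graph :=
    hA.mem_of_tendsto (hyw.prodMk_nhds hAyw) (Eventually.of_forall fun n => A.mem_graph (y n))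
  obtain ⟨z, rfl, rfl⟩ := (LinearPMap.mem_graph_iff A).1 hgraph
  exact ⟨z, hw, hAw⟩

theorem of_polynomial (hid : CommutesWithMul A b fun t => t) (q : Polynomial ℝ) :
    CommutesWithMul A b fun t => ((q.eval t : ℝ) : ℂ) := by
  induction q using Polynomial.induction_on with
  | C a => exact (one.const_mul (a : ℂ)).congr fun t => by simp
  | add q r hq hr => exact (hq.add hr).congr fun t => by simp
  | monomial n a ih => exact (ih.mul hid).congr fun t => by simp [pow_succ, mul_assoc]

theorem of_continuous [Fact (1 ≤ p)] (hp : p ≠ ∞) (hA : A.IsClosed) {M : ℝ}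
    (hbdd : ∀ᵐ ω ∂μ, |b ω| ≤ M) (hid : CommutesWithMul A b fun t => t) {g : ℝ → ℝ}
    (hg : Continuous g) : CommutesWithMul A b fun t => (g t : ℂ) := by
  obtain ⟨C, hC⟩ :=
    (isCompact_Icc (a := -M) (b := M)).exists_bound_of_continuousOn hg.continuousOn
  choose q hq using fun n : ℕ => exists_polynomial_near_of_continuousOn (-M) M g
    hg.continuousOn (1 / (n + 1)) Nat.one_div_pos_of_nat
  have hb : ∀ᵐ ω ∂μ, b ω ∈ Icc (-M) M := hbdd.mono fun ω h => abs_le.1 h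
  refine of_tendsto hp hA (C := C + 1) (fun n => ?_) ?_ fun n => of_polynomial hid (q n)
  · filter_upwards [hb] with ω hω
    have hqg : |(q n).eval (b ω) - g (b ω)| ≤ 1 := (hq n _ hω).le.trans (by bound)
    have hgC : |g (b ω)| ≤ C := hC _ hω
    rw [Complex.norm_real, Real.norm_eq_abs]
    linarith [abs_sub_abs_le_abs_sub ((q n).eval (b ω)) (g (b ω))]
  · filter_upwards [hb] with ω hω
    have hlim : Tendsto (fun n => (q n).eval (b ω)) atTop (𝓝 (g (b ω))) :=
      tendsto_iff_norm_sub_tendsto_zero.2 <| squeeze_zero (fun _ => norm_nonneg _)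
        (fun n => (hq n _ hω).le) tendsto_one_div_add_atTop_nhds_zero_nat
    exact (Complex.continuous_ofReal.tendsto _).comp hlim

theorem indicator_of_isClosed [Fact (1 ≤ p)] (hp : p ≠ ∞) (hA : A.IsClosed) {M : ℝ}
    (hbdd : ∀ᵐ ω ∂μ, |b ω| ≤ M) (hid : CommutesWithMul A b fun t => t) {F : Set ℝ}
    (hF : IsClosed F) : CommutesWithMul A b (F.indicator 1) := by
  refine of_tendsto hp hA (g := fun n t => ((hF.apprSeq n t : ℝ) : ℂ)) (C := 1)
    (fun n => ae_of_all _ fun ω => ?_) (ae_of_all _ fun ω => ?_)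
    fun n => of_continuous hp hA hbdd hid (NNReal.continuous_coe.comp (hF.apprSeq n).continuous)
  · simpa using HasOuterApproxClosed.apprSeq_apply_le_one hF n (b ω)
  · have h := ((Complex.continuous_ofReal.comp NNReal.continuous_coe).tendsto _).comp
      (tendsto_pi_nhds.1 (HasOuterApproxClosed.tendsto_apprSeq hF) (b ω))
    by_cases hω : b ω ∈ F <;> simpa [hω, Function.comp_def] using h

theorem indicator_compl {s : Set ℝ} (hs : CommutesWithMul A b (s.indicator 1)) :
    CommutesWithMul A b (sᶜ.indicator 1) :=
  (one.sub hs).congr fun t => by simp [Set.indicator_compl]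

theorem indicator_union {s t : Set ℝ} (hs : CommutesWithMul A b (s.indicator 1))
    (ht : CommutesWithMul A b (t.indicator 1)) : CommutesWithMul A b ((s ∪ t).indicator 1) := by
  refine ((hs.add ht).sub (hs.mul ht)).congr fun x => ?_
  by_cases hxs : x ∈ s <;> by_cases hxt : x ∈ t <;> simp [hxs, hxt]

theorem indicator_accumulate {s : ℕ → Set ℝ} (hs : ∀ n, CommutesWithMul A b ((s n).indicator 1))
    (n : ℕ) : CommutesWithMul A b ((accumulate s n).indicator 1) := by
  induction n with
  | zero => simpa [accumulate_zero_nat] using hs 0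
  | succ n ih => simpa [accumulate_succ] using indicator_union ih (hs (n + 1))

theorem indicator_iUnion [Fact (1 ≤ p)] (hp : p ≠ ∞) (hA : A.IsClosed) {s : ℕ → Set ℝ}
    (hs : ∀ n, CommutesWithMul A b ((s n).indicator 1)) :
    CommutesWithMul A b ((⋃ n, s n).indicator 1) := by
  refine of_tendsto hp hA (C := 1) (fun n => ae_of_all _ fun ω => ?_) (ae_of_all _ fun ω => ?_)
    (indicator_accumulate hs)
  · by_cases h : b ω ∈ accumulate s n <;> simp [h]
  · refine (tendsto_indicator_const_apply_iff_eventually atTop (1 : ℂ) (b ω)).2 ?_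
    by_cases h : b ω ∈ ⋃ n, s n
    · obtain ⟨i, hi⟩ := mem_iUnion.1 h
      filter_upwards [eventually_ge_atTop i] with n hn
      exact iff_of_true (monotone_accumulate hn (subset_accumulate hi)) h
    · exact Eventually.of_forall fun n =>
        iff_of_false (fun h' => h (accumulate_subset_iUnion n h')) h

theorem indicator_of_measurableSet [Fact (1 ≤ p)] (hp : p ≠ ∞) (hA : A.IsClosed) {M : ℝ}
    (hbdd : ∀ᵐ ω ∂μ, |b ω| ≤ M) (hid : CommutesWithMul A b fun t => t) {E : Set ℝ}
    (hE : MeasurableSet E) : CommutesWithMul A b (E.indicator 1) := by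
  rw [BorelSpace.measurable_eq (α := ℝ), borel_eq_generateFrom_isClosed] at hE
  induction E, hE using MeasurableSpace.generateFrom_induction with
  | hC F hF => exact indicator_of_isClosed hp hA hbdd hid hF
  | empty => exact (one.const_mul 0).congr fun t => by simp
  | compl s _ hs => exact indicator_compl hs
  | iUnion s _ hs => exact indicator_iUnion hp hA hs

theorem of_simpleFunc [Fact (1 ≤ p)] (hp : p ≠ ∞) (hA : A.IsClosed) {M : ℝ}
    (hbdd : ∀ᵐ ω ∂μ, |b ω| ≤ M) (hid : CommutesWithMul A b fun t => t) (f : SimpleFunc ℝ ℂ) :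
    CommutesWithMul A b f := by
  induction f using SimpleFunc.induction with
  | @const c s hs =>
    refine ((indicator_of_measurableSet hp hA hbdd hid hs).const_mul c).congr fun t => ?_
    by_cases ht : t ∈ s <;> simp [ht]
  | add _ hf hg => exact hf.add hg

theorem of_measurable [Fact (1 ≤ p)] (hp : p ≠ ∞) (hA : A.IsClosed) {M : ℝ}
    (hbdd : ∀ᵐ ω ∂μ, |b ω| ≤ M) (hid : CommutesWithMul A b fun t => t) {f : ℝ → ℂ}
    (hf : Measurable f) {K : ℝ} (hfK : ∀ᵐ ω ∂μ, ‖f (b ω)‖ ≤ K) : CommutesWithMul A b f :=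
  of_tendsto hp hA (g := fun n => SimpleFunc.approxOn f hf univ 0 (mem_univ 0) n) (C := K + K)
    (fun n => hfK.mono fun ω h =>
      (SimpleFunc.norm_approxOn_zero_le hf _ _ n).trans (add_le_add h h))
    (ae_of_all _ fun ω => SimpleFunc.tendsto_approxOn hf _ (by simp))
    fun n => of_simpleFunc hp hA hbdd hid _

end CommutesWithMul

end

theorem stmt_4_general {X : Type*} [MeasurableSpace X] (μ : Measure X)
    (b : X → ℝ) (M : ℝ) (hbdd : ∀ᵐ x ∂μ, |b x| ≤ M)
    (B : Lp ℂ 2 μ →L[ℂ] Lp ℂ 2 μ)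
    (hB : ∀ g : Lp ℂ 2 μ, (B g : X → ℂ) =ᵐ[μ] fun x => (b x : ℂ) * g x)
    (A : Lp ℂ 2 μ →ₗ.[ℂ] Lp ℂ 2 μ)
    (hAclosed : A.IsClosed)
    -- `BA ⊆ AB`: for `x ∈ D(A)`, `Bx ∈ D(A)` and `ABx = BAx`
    (hBA : ∀ x : A.domain, ∃ h : B ↑x ∈ A.domain, A ⟨B ↑x, h⟩ = B (A x)) :
    ∀ f : ℝ → ℂ, Measurable f → (∃ K : ℝ, ∀ t : ℝ, ‖f t‖ ≤ K) →
    ∀ fB : Lp ℂ 2 μ →L[ℂ] Lp ℂ 2 μ,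
      (∀ g : Lp ℂ 2 μ, (fB g : X → ℂ) =ᵐ[μ] fun x => f (b x) * g x) →
      ∀ x : A.domain, ∃ h : fB ↑x ∈ A.domain, A ⟨fB ↑x, h⟩ = fB (A x) := by
  intro f hf ⟨K, hK⟩ fB hfB
  have hid : CommutesWithMul A b fun t => t := (commutesWithMul_iff hB).2 hBA
  exact (commutesWithMul_iff hfB).1 <| CommutesWithMul.of_measurable ENNReal.ofNat_ne_top
    hAclosed hbdd hid hf (ae_of_all _ fun ω => hK (b ω))

theorem stmt_4 {X : Type*} [MeasurableSpace X] (μ : Measure X)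
    (b : X → ℝ) (hb : Measurable b) (M : ℝ) (hbdd : ∀ᵐ x ∂μ, |b x| ≤ M)
    (B : Lp ℂ 2 μ →L[ℂ] Lp ℂ 2 μ)
    (hB : ∀ g : Lp ℂ 2 μ, (B g : X → ℂ) =ᵐ[μ] fun x => (b x : ℂ) * g x)
    (A : Lp ℂ 2 μ →ₗ.[ℂ] Lp ℂ 2 μ)
    (hAdense : Dense (A.domain : Set (Lp ℂ 2 μ)))
    (hAclosed : A.IsClosed)
    -- `BA ⊆ AB`: for `x ∈ D(A)`, `Bx ∈ D(A)` and `ABx = BAx`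
    (hBA : ∀ x : A.domain, ∃ h : B ↑x ∈ A.domain, A ⟨B ↑x, h⟩ = B (A x)) :
    ∀ f : ℝ → ℂ, Measurable f → (∃ K : ℝ, ∀ t : ℝ, ‖f t‖ ≤ K) →
    ∀ fB : Lp ℂ 2 μ →L[ℂ] Lp ℂ 2 μ,
      (∀ g : Lp ℂ 2 μ, (fB g : X → ℂ) =ᵐ[μ] fun x => f (b x) * g x) →
      ∀ x : A.domain, ∃ h : fB ↑x ∈ A.domain, A ⟨fB ↑x, h⟩ = fB (A x) :=
  stmt_4_general μ b M hbdd B hB A hAclosed hBA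
end

section
/- On a non-compact complete Riemannian manifold Σ (more generally, whenever the only compactly supported harmonic functions are zero), for an ultrastatic globally hyperbolic spacetime M = ℝ × Σ with metric g = −dt² + h, any spatially compactly supported solution A of the Maxwell equations δdA = 0 satisfying the Coulomb gauge δ_Σ A_Σ = 0 automatically satisfies the temporal gauge A₀ = 0, where A = A₀ dt + A_Σ. -/
theorem stmt_15 {F0 F1 : Type*}
    [AddCommGroup F0] [Module ℂ F0] [AddCommGroup F1] [Module ℂ F1]
    (Δ0 : F0 →ₗ[ℂ] F0) (δS : F1 →ₗ[ℂ] F0)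
    (csupp : F0 → Prop)
    (Dt : (ℝ → F0) → (ℝ → F0))
    -- the time derivative of the zero curve vanishes
    (hDt0 : ∀ f : ℝ → F0, (∀ u, f u = 0) → ∀ t, Dt f t = 0)
    (A0 : ℝ → F0) (AS : ℝ → F1)
    -- the 0-component of the Maxwell equations `δdA = 0`:  `Δ₀A₀ − ∂_t(δ_S A_Σ) = 0`
    (hMaxwell0 : ∀ t : ℝ, Δ0 (A0 t) - Dt (fun u => δS (AS u)) t = 0)
    -- `A` is spatially compactly supported
    (hsupp : ∀ t : ℝ, csupp (A0 t))
    -- on a non-compact (complete) Σ the only compactly supported harmonic function is zero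
    (hharm : ∀ f : F0, csupp f → Δ0 f = 0 → f = 0)
    -- Coulomb gauge
    (hCoulomb : ∀ t : ℝ, δS (AS t) = 0) :
    -- temporal gauge
    ∀ t : ℝ, A0 t = 0 := by
  intro t
  apply hharm _ (hsupp t)
  have h := hMaxwell0 t
  rw [hDt0 _ (fun u => hCoulomb u) t, sub_zero] at h
  exact h
end

section
/- On an ultrastatic globally hyperbolic spacetime (M = ℝ×Σ, g = −dt² + h), for a solution A ∈ ker(δd) of the Maxwell equations, the following are equivalent: (i) A satisfies the Cauchy radiation gauge on Σ₀ (δA = 0 and A₀|_{Σ₀} = ∂_t A₀|_{Σ₀} = 0); (ii) A satisfies the temporal gauge A₀ = 0 together with the Coulomb gauge δ_Σ A_Σ = 0; (iii) A satisfies the temporal gauge A₀ = 0 and the Lorenz gauge δA = 0. -/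
theorem stmt_16 {F0 F1 : Type*}
    [AddCommGroup F0] [Module ℂ F0] [AddCommGroup F1] [Module ℂ F1]
    (Δ0 : F0 →ₗ[ℂ] F0) (δS : F1 →ₗ[ℂ] F0)
    (Dt : (ℝ → F0) → (ℝ → F0))
    (hDt0 : ∀ f : ℝ → F0, (∀ u, f u = 0) → ∀ t, Dt f t = 0)
    (A0 : ℝ → F0) (AS : ℝ → F1) (δA : ℝ → F0)
    -- ultrastatic identity: `δA = δ_S A_S + ∂_t A₀`
    (hδA : ∀ t : ℝ, δA t = δS (AS t) + Dt A0 t)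
    -- Maxwell (`δdA = 0`) in Lorenz gauge gives the wave equation for `A₀`
    (hwave : (∀ t : ℝ, δA t = 0) → ∀ t : ℝ, Dt (Dt A0) t + Δ0 (A0 t) = 0)
    -- well-posedness: a solution of the wave equation with zero Cauchy data on Σ₀ vanishes
    (huniq : ∀ f : ℝ → F0, (∀ t : ℝ, Dt (Dt f) t + Δ0 (f t) = 0) →
      f 0 = 0 → Dt f 0 = 0 → ∀ t : ℝ, f t = 0) :
    -- (i) ⟺ (ii) ⟺ (iii)
    (((∀ t : ℝ, δA t = 0) ∧ A0 0 = 0 ∧ Dt A0 0 = 0) ↔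
      ((∀ t : ℝ, A0 t = 0) ∧ (∀ t : ℝ, δS (AS t) = 0))) ∧
    (((∀ t : ℝ, A0 t = 0) ∧ (∀ t : ℝ, δS (AS t) = 0)) ↔
      ((∀ t : ℝ, A0 t = 0) ∧ (∀ t : ℝ, δA t = 0))) := by
  constructor
  · constructor
    · rintro ⟨hL, h0, h1⟩
      have hA0 : ∀ t, A0 t = 0 := huniq A0 (hwave hL) h0 h1
      refine ⟨hA0, fun t => ?_⟩
      have := hδA t
      rw [hL t, hDt0 A0 hA0 t, add_zero] at this
      exact this.symm
    · rintro ⟨hA0, hC⟩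
      have hD : ∀ t, Dt A0 t = 0 := hDt0 A0 hA0
      exact ⟨fun t => by rw [hδA t, hC t, hD t, add_zero], hA0 0, hD 0⟩
  · constructor
    · rintro ⟨hA0, hC⟩
      have hD : ∀ t, Dt A0 t = 0 := hDt0 A0 hA0
      exact ⟨hA0, fun t => by rw [hδA t, hC t, hD t, add_zero]⟩
    · rintro ⟨hA0, hL⟩
      have hD : ∀ t, Dt A0 t = 0 := hDt0 A0 hA0
      refine ⟨hA0, fun t => ?_⟩
      have := hδA t
      rw [hL t, hD t, add_zero] at this
      exact this.symm
end
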